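/- Let G be an abelian group, M a module over the group algebra k[G], and {M_σ | σ ∈ G} a family of k[G]-submodules of M such that M = ⊕_{σ ∈ G} M_σ (internal direct sum); for m ∈ M write m = ∑_σ m_σ with m_σ ∈ M_σ. Then the k-linear map R : M ⊗ M → M ⊗ M defined by R(n ⊗ m) = ∑_σ (σ · n) ⊗ m_σ for all n, m ∈ M is a solution of the Long equation. -/

import Mathlib

open TensorProduct

noncomputable section

variable {k M : Type*} [Field k] [AddCommGroup M] [Module k M]

/-- The flip map τ : M ⊗ M → M ⊗ M, τ(m ⊗ n) = n ⊗ m. -/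
def tau (k M : Type*) [Field k] [AddCommGroup M] [Module k M] :
    M ⊗[k] M →ₗ[k] M ⊗[k] M := (TensorProduct.comm k M M).toLinearMap

/-- R¹² = R ⊗ id on M ⊗ (M ⊗ M) (transported along the associator). -/
def R12 (R : M ⊗[k] M →ₗ[k] M ⊗[k] M) :
    M ⊗[k] (M ⊗[k] M) →ₗ[k] M ⊗[k] (M ⊗[k] M) :=
  (TensorProduct.assoc k M M M).toLinearMap ∘ₗ
    TensorProduct.map R LinearMap.id ∘ₗ (TensorProduct.assoc k M M M).symm.toLinearMap

/-- R²³ = id ⊗ R on M ⊗ (M ⊗ M). -/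
def R23 (R : M ⊗[k] M →ₗ[k] M ⊗[k] M) :
    M ⊗[k] (M ⊗[k] M) →ₗ[k] M ⊗[k] (M ⊗[k] M) :=
  TensorProduct.map LinearMap.id R

/-- R¹³ = (id ⊗ τ)(R ⊗ id)(id ⊗ τ) on M ⊗ (M ⊗ M). -/
def R13 (R : M ⊗[k] M →ₗ[k] M ⊗[k] M) :
    M ⊗[k] (M ⊗[k] M) →ₗ[k] M ⊗[k] (M ⊗[k] M) :=
  TensorProduct.map LinearMap.id (tau k M) ∘ₗ R12 R ∘ₗ
    TensorProduct.map LinearMap.id (tau k M)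

/-- R is a solution of the Long equation: R¹²R¹³ = R¹³R¹² and R¹²R²³ = R²³R¹². -/
def IsLongSolution (R : M ⊗[k] M →ₗ[k] M ⊗[k] M) : Prop :=
  R12 R ∘ₗ R13 R = R13 R ∘ₗ R12 R ∧ R12 R ∘ₗ R23 R = R23 R ∘ₗ R12 R

end

theorem long_equation_graded_module
    {k : Type*} [Field k] {G : Type*} [CommGroup G] [DecidableEq G]
    {M : Type*} [AddCommGroup M] [Module k M]
    [Module (MonoidAlgebra k G) M] [IsScalarTower k (MonoidAlgebra k G) M]
    (Mσ : G → Submodule (MonoidAlgebra k G) M)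
    (hinternal : DirectSum.IsInternal Mσ)
    (R : M ⊗[k] M →ₗ[k] M ⊗[k] M)
    (hR : ∀ (σ : G) (n m : M), m ∈ Mσ σ →
      R (n ⊗ₜ[k] m) = ((MonoidAlgebra.of k G σ) • n) ⊗ₜ[k] m) :
    IsLongSolution R := by
  have htop := hinternal.submodule_iSup_eq_top
  have h12 : ∀ (σ : G) (a b : M), b ∈ Mσ σ → ∀ c : M,
      R12 R (a ⊗ₜ[k] (b ⊗ₜ[k] c)) =
        ((MonoidAlgebra.of k G σ) • a) ⊗ₜ[k] (b ⊗ₜ[k] c) := by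
    intro σ a b hb c
    simp [R12, hR σ a b hb]
  have h23 : ∀ (τ : G) (a b c : M), c ∈ Mσ τ →
      R23 R (a ⊗ₜ[k] (b ⊗ₜ[k] c)) =
        a ⊗ₜ[k] (((MonoidAlgebra.of k G τ) • b) ⊗ₜ[k] c) := by
    intro τ a b c hc
    simp [R23, hR τ b c hc]
  have h13 : ∀ (τ : G) (a b c : M), c ∈ Mσ τ →
      R13 R (a ⊗ₜ[k] (b ⊗ₜ[k] c)) =
        ((MonoidAlgebra.of k G τ) • a) ⊗ₜ[k] (b ⊗ₜ[k] c) := by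
    intro τ a b c hc
    simp [R13, tau, R12, hR τ a c hc]
  have key : ∀ (f g : M ⊗[k] (M ⊗[k] M) →ₗ[k] M ⊗[k] (M ⊗[k] M)),
      (∀ (a : M) (σ τ : G) (b c : M), b ∈ Mσ σ → c ∈ Mσ τ →
        f (a ⊗ₜ[k] (b ⊗ₜ[k] c)) = g (a ⊗ₜ[k] (b ⊗ₜ[k] c))) → f = g := by
    intro f g hfg
    apply TensorProduct.ext'
    intro a bc
    induction bc using TensorProduct.induction_on with
    | zero => simp
    | add x y hx hy => rw [tmul_add, map_add, map_add, hx, hy]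
    | tmul b c =>
      have hb : b ∈ ⨆ σ, Mσ σ := htop ▸ Submodule.mem_top
      refine Submodule.iSup_induction
        (motive := fun b => f (a ⊗ₜ[k] (b ⊗ₜ[k] c)) = g (a ⊗ₜ[k] (b ⊗ₜ[k] c)))
        Mσ hb ?_ ?_ ?_
      · intro σ b hbσ
        have hc : c ∈ ⨆ τ, Mσ τ := htop ▸ Submodule.mem_top
        refine Submodule.iSup_induction
          (motive := fun c => f (a ⊗ₜ[k] (b ⊗ₜ[k] c)) = g (a ⊗ₜ[k] (b ⊗ₜ[k] c)))
          Mσ hc ?_ ?_ ?_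
        · intro τ c hcτ
          exact hfg a σ τ b c hbσ hcτ
        · simp
        · intro x y hx hy
          rw [tmul_add, tmul_add, map_add, map_add, hx, hy]
      · simp
      · intro x y hx hy
        rw [add_tmul, tmul_add, map_add, map_add, hx, hy]
  constructor
  · apply key
    intro a σ τ b c hb hc
    rw [LinearMap.comp_apply, LinearMap.comp_apply, h13 τ a b c hc,
      h12 σ _ b hb c, h12 σ a b hb c, h13 τ _ b c hc, smul_smul, smul_smul,
      mul_comm]
  · apply key
    intro a σ τ b c hb hc
    rw [LinearMap.comp_apply, LinearMap.comp_apply, h23 τ a b c hc,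
      h12 σ a _ ((Mσ σ).smul_mem _ hb) c, h12 σ a b hb c, h23 τ _ b c hc]
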